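/- arXiv:1607.08195 — 2 statements merged into one kernel-verified Lean document; each statement's English description precedes it below -/
import Mathlib

section
/- Let 𝒢 be a finite nonempty family of closed intervals in ℝ and let s = s(𝒢) be the minimal integer for which there exists a graph homomorphism f : 𝒢 → ℐ(s). Then every unit interval [i,i+1] with 0 ≤ i ≤ s lies in the image f(𝒢). -/
def AdjI (I J : ℝ × ℝ) : Prop :=
  ∃ x : ℝ, Set.Icc I.1 I.2 ∩ Set.Icc J.1 J.2 = {x}

def AdjN (p q : ℕ × ℕ) : Prop :=
  ∃ x : ℝ, Set.Icc (p.1 : ℝ) p.2 ∩ Set.Icc (q.1 : ℝ) q.2 = {x}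

def memIs (s : ℕ) (p : ℕ × ℕ) : Prop :=
  p = (0, 1) ∨ p = (s, s + 1) ∨ (1 ≤ p.1 ∧ p.1 < p.2 ∧ p.2 ≤ s)

/-!
Suppose `f` misses the unit interval `[i, i+1]` of `ℐ(s)`, `s ≥ 1`. Then `ℐ(s)` with that interval
removed maps homomorphically into `ℐ(s-1)`, so composing with `f` contradicts the minimality of
`s`. For `0 < i < s`, contract `[i, i+1]` to the point `i`. For `i = 0`, contract `[1, 2]` to the
point `1`, except that `[1, 2]` itself becomes the new first unit interval `[0, 1]`; the case
`i = s` is the mirror image. For `s = 0` there is nothing to remove: `ℐ(0) = {[0, 1]}`.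
-/

lemma memIs_iff (s : ℕ) (p : ℕ × ℕ) : memIs s p ↔
    (p.1 = 0 ∧ p.2 = 1) ∨ (p.1 = s ∧ p.2 = s + 1) ∨ (1 ≤ p.1 ∧ p.1 < p.2 ∧ p.2 ≤ s) := by
  simp [memIs, Prod.ext_iff]

lemma memIs.fst_lt_snd {s : ℕ} {p : ℕ × ℕ} (h : memIs s p) : p.1 < p.2 := by
  rw [memIs_iff] at h; omega

lemma adjN_iff {p q : ℕ × ℕ} (hp : p.1 < p.2) (hq : q.1 < q.2) :
    AdjN p q ↔ p.2 = q.1 ∨ q.2 = p.1 := by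
  constructor
  · rintro ⟨x, hx⟩
    rw [Set.Icc_inter_Icc, Set.Icc_eq_singleton_iff] at hx
    have hmeet : (p.1 ⊔ q.1 : ℕ) = (p.2 ⊓ q.2 : ℕ) := by exact_mod_cast hx.1.trans hx.2.symm
    omega
  · intro h
    refine ⟨((p.1 ⊔ q.1 : ℕ) : ℝ), ?_⟩
    rw [Set.Icc_inter_Icc, Set.Icc_eq_singleton_iff]
    have hmeet : ((p.2 ⊓ q.2 : ℕ) : ℝ) = ((p.1 ⊔ q.1 : ℕ) : ℝ) := by congr 1; omega
    push_cast at hmeet ⊢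
    exact ⟨rfl, hmeet⟩

/-- `F` is a homomorphism from `ℐ(s)` with the unit interval `[i, i+1]` removed into `ℐ(s')`. -/
def IsHomAwayFrom (s i s' : ℕ) (F : ℕ × ℕ → ℕ × ℕ) : Prop :=
  (∀ p, memIs s p → p ≠ (i, i + 1) → memIs s' (F p)) ∧
    ∀ p q, memIs s p → memIs s q → p ≠ (i, i + 1) → q ≠ (i, i + 1) →
      AdjN p q → AdjN (F p) (F q)

lemma isHomAwayFrom_of_touch {s i s' : ℕ} {F : ℕ × ℕ → ℕ × ℕ}
    (hmem : ∀ p, memIs s p → p ≠ (i, i + 1) → memIs s' (F p))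
    (htouch : ∀ p q, memIs s p → memIs s q → p ≠ (i, i + 1) → q ≠ (i, i + 1) →
      p.2 = q.1 ∨ q.2 = p.1 → (F p).2 = (F q).1 ∨ (F q).2 = (F p).1) :
    IsHomAwayFrom s i s' F := by
  refine ⟨hmem, fun p q hp hq hpi hqi hpq => ?_⟩
  rw [adjN_iff (hmem p hp hpi).fst_lt_snd (hmem q hq hqi).fst_lt_snd]
  exact htouch p q hp hq hpi hqi ((adjN_iff hp.fst_lt_snd hq.fst_lt_snd).mp hpq)

lemma isHomAwayFrom_first (s : ℕ) :
    IsHomAwayFrom s 0 (s - 1)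
      (fun p => if p.1 = 1 ∧ p.2 = 2 then (0, 1) else (max p.1 2 - 1, max p.2 2 - 1)) := by
  refine isHomAwayFrom_of_touch (fun p hp hpi => ?_) (fun p q hp hq hpi hqi htouch => ?_)
  · rw [memIs_iff] at hp ⊢
    simp only [Ne, Prod.ext_iff] at hpi
    split_ifs <;> omega
  · rw [memIs_iff] at hp hq
    simp only [Ne, Prod.ext_iff] at hpi hqi
    split_ifs <;> omega

lemma isHomAwayFrom_last (s : ℕ) :
    IsHomAwayFrom s s (s - 1)
      (fun p => if p.1 = s - 1 ∧ p.2 = s then (s - 1, s) else (p.1, min p.2 (s - 1))) := by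
  refine isHomAwayFrom_of_touch (fun p hp hpi => ?_) (fun p q hp hq hpi hqi htouch => ?_)
  · rw [memIs_iff] at hp ⊢
    simp only [Ne, Prod.ext_iff] at hpi
    split_ifs <;> omega
  · rw [memIs_iff] at hp hq
    simp only [Ne, Prod.ext_iff] at hpi hqi
    split_ifs <;> omega

lemma isHomAwayFrom_inner {s i : ℕ} (hi0 : 0 < i) (his : i < s) :
    IsHomAwayFrom s i (s - 1)
      (fun p => (if p.1 ≤ i then p.1 else p.1 - 1, if p.2 ≤ i then p.2 else p.2 - 1)) := by
  refine isHomAwayFrom_of_touch (fun p hp hpi => ?_) (fun p q hp hq hpi hqi htouch => ?_)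
  · rw [memIs_iff] at hp ⊢
    simp only [Ne, Prod.ext_iff] at hpi
    split_ifs <;> omega
  · rw [memIs_iff] at hp hq
    simp only [Ne, Prod.ext_iff] at hpi hqi
    split_ifs <;> omega

lemma exists_isHomAwayFrom {s i : ℕ} (hi : i ≤ s) :
    ∃ F, IsHomAwayFrom s i (s - 1) F := by
  obtain rfl | hi0 := Nat.eq_zero_or_pos i
  · exact ⟨_, isHomAwayFrom_first _⟩
  obtain rfl | his := hi.eq_or_lt
  · exact ⟨_, isHomAwayFrom_last _⟩
  · exact ⟨_, isHomAwayFrom_inner hi0 his⟩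

theorem stmt_9_general (G : Finset (ℝ × ℝ)) (hne : G.Nonempty)
    (s : ℕ) (f : ℝ × ℝ → ℕ × ℕ)
    (hf1 : ∀ I ∈ G, memIs s (f I))
    (hf2 : ∀ I ∈ G, ∀ J ∈ G, AdjI I J → AdjN (f I) (f J))
    (hmin : ∀ s' < s, ¬ ∃ g : ℝ × ℝ → ℕ × ℕ,
      (∀ I ∈ G, memIs s' (g I)) ∧
      (∀ I ∈ G, ∀ J ∈ G, AdjI I J → AdjN (g I) (g J))) :
    ∀ i ≤ s, ∃ I ∈ G, f I = (i, i + 1) := by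
  intro i hi
  by_contra! hmiss
  obtain rfl | hs := Nat.eq_zero_or_pos s
  · obtain ⟨I, hI⟩ := hne
    have hI1 := hf1 I hI
    rw [memIs_iff] at hI1
    exact hmiss I hI (Prod.ext (by omega) (by omega))
  obtain ⟨F, hFmem, hFadj⟩ := exists_isHomAwayFrom hi
  refine hmin (s - 1) (by omega) ⟨F ∘ f, fun I hI => hFmem _ (hf1 I hI) (hmiss I hI),
    fun I hI J hJ hIJ => ?_⟩
  exact hFadj _ _ (hf1 I hI) (hf1 J hJ) (hmiss I hI) (hmiss J hJ) (hf2 I hI J hJ hIJ)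

/-- If s = s(𝒢) is minimal admitting a homomorphism f : 𝒢 → ℐ(s), then every unit
interval [i,i+1], 0 ≤ i ≤ s, lies in the image f(𝒢). -/
theorem stmt_9 (G : Finset (ℝ × ℝ)) (hne : G.Nonempty) (hpos : ∀ I ∈ G, I.1 < I.2)
    (s : ℕ) (f : ℝ × ℝ → ℕ × ℕ)
    (hf1 : ∀ I ∈ G, memIs s (f I))
    (hf2 : ∀ I ∈ G, ∀ J ∈ G, AdjI I J → AdjN (f I) (f J))
    (hmin : ∀ s' < s, ¬ ∃ g : ℝ × ℝ → ℕ × ℕ,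
      (∀ I ∈ G, memIs s' (g I)) ∧
      (∀ I ∈ G, ∀ J ∈ G, AdjI I J → AdjN (g I) (g J))) :
    ∀ i ≤ s, ∃ I ∈ G, f I = (i, i + 1) :=
  stmt_9_general G hne s f hf1 hf2 hmin
end

section
/- The maximum cardinality of a nearly neighbourly family of 2-boxes (standard rectangles in ℝ²) is exactly 5. -/
def AdjBox {n : ℕ} (I J : Fin n → ℝ × ℝ) : Prop := ∃ i, AdjI (I i) (J i)

/-!
Two nondegenerate intervals meet in exactly one point iff one ends where the other begins, so
no three of them are pairwise adjacent. Colouring each pair of boxes of a nearly neighbourly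
family by a coordinate in which they are adjacent therefore gives a 2-colouring of the complete
graph without monochromatic triangles, and the family has at most `R(3,3) - 1 = 5` members.
-/

theorem adjI_iff {I J : ℝ × ℝ} (hI : I.1 < I.2) (hJ : J.1 < J.2) :
    AdjI I J ↔ I.2 = J.1 ∨ J.2 = I.1 := by
  constructor
  · rintro ⟨x, hx⟩
    rw [Set.Icc_inter_Icc, Set.Icc_eq_singleton_iff] at hx
    have hmax_min : max I.1 J.1 = min I.2 J.2 := hx.1.trans hx.2.symm
    rcases max_cases I.1 J.1 with ⟨h₁, _⟩ | ⟨h₁, _⟩ <;>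
      rcases min_cases I.2 J.2 with ⟨h₂, _⟩ | ⟨h₂, _⟩ <;>
      rw [h₁, h₂] at hmax_min
    · exact absurd hmax_min hI.ne
    · exact Or.inr hmax_min.symm
    · exact Or.inl hmax_min.symm
    · exact absurd hmax_min hJ.ne
  · rintro (h | h)
    · exact ⟨I.2, h ▸ Set.Icc_inter_Icc_eq_singleton hI.le (h ▸ hJ.le)⟩
    · exact ⟨J.2, by
        rw [Set.inter_comm, ← h]; exact Set.Icc_inter_Icc_eq_singleton hJ.le (h ▸ hI.le)⟩

theorem not_adjI_triangle {I J K : ℝ × ℝ} (hI : I.1 < I.2) (hJ : J.1 < J.2) (hK : K.1 < K.2)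
    (hIJ : AdjI I J) (hIK : AdjI I K) (hJK : AdjI J K) : False := by
  rw [adjI_iff hI hJ] at hIJ
  rw [adjI_iff hI hK] at hIK
  rw [adjI_iff hJ hK] at hJK
  rcases hIJ with h | h <;> rcases hIK with h' | h' <;> rcases hJK with h'' | h'' <;> linarith

section Ramsey

variable {α : Type*} {S : Finset α} {r s : α → α → Prop}

theorem card_filter_erase_lt_three
    (hcover : ∀ x ∈ S, ∀ y ∈ S, x ≠ y → r x y ∨ s x y)
    (hr : ∀ x ∈ S, ∀ y ∈ S, ∀ z ∈ S, r x y → r x z → r y z → False)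
    (hs : ∀ x ∈ S, ∀ y ∈ S, ∀ z ∈ S, s x y → s x z → s y z → False)
    [DecidableEq α] {a : α} (ha : a ∈ S) [DecidablePred (r a)] :
    ((S.erase a).filter (r a)).card < 3 := by
  by_contra! h
  obtain ⟨x, y, z, hx, hy, hz, hxy, hxz, hyz⟩ := Finset.two_lt_card_iff.mp h
  simp only [Finset.mem_filter, Finset.mem_erase] at hx hy hz
  obtain ⟨⟨-, hxS⟩, hax⟩ := hx
  obtain ⟨⟨-, hyS⟩, hay⟩ := hy
  obtain ⟨⟨-, hzS⟩, haz⟩ := hz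
  rcases hcover x hxS y hyS hxy with rxy | sxy
  · exact hr a ha x hxS y hyS hax hay rxy
  rcases hcover x hxS z hzS hxz with rxz | sxz
  · exact hr a ha x hxS z hzS hax haz rxz
  rcases hcover y hyS z hzS hyz with ryz | syz
  · exact hr a ha y hyS z hzS hay haz ryz
  · exact hs x hxS y hyS z hzS sxy sxz syz

/-- `R(3,3) ≤ 6`. -/
theorem card_le_five_of_forall_not_triangle
    (hcover : ∀ x ∈ S, ∀ y ∈ S, x ≠ y → r x y ∨ s x y)
    (hr : ∀ x ∈ S, ∀ y ∈ S, ∀ z ∈ S, r x y → r x z → r y z → False)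
    (hs : ∀ x ∈ S, ∀ y ∈ S, ∀ z ∈ S, s x y → s x z → s y z → False) :
    S.card ≤ 5 := by
  classical
  by_contra! hS
  obtain ⟨a, ha⟩ : S.Nonempty := Finset.card_pos.mp (by omega)
  have hr_few := card_filter_erase_lt_three hcover hr hs ha
  have hs_few := card_filter_erase_lt_three (fun x hx y hy hxy => (hcover x hx y hy hxy).symm)
    hs hr ha
  have hnot_r_sub : (S.erase a).filter (¬ r a ·) ⊆ (S.erase a).filter (s a) := by
    intro x hx
    simp only [Finset.mem_filter, Finset.mem_erase] at hx ⊢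
    exact ⟨hx.1, (hcover a ha x hx.1.2 (Ne.symm hx.1.1)).resolve_left hx.2⟩
  have hsplit := Finset.card_filter_add_card_filter_not (s := S.erase a) (p := r a)
  have := Finset.card_le_card hnot_r_sub
  rw [Finset.card_erase_of_mem ha] at hsplit
  omega

end Ramsey

theorem AdjBox.fin_two {I J : Fin 2 → ℝ × ℝ} (h : AdjBox I J) :
    AdjI (I 0) (J 0) ∨ AdjI (I 1) (J 1) := by
  obtain ⟨i, hi⟩ := h
  fin_cases i
  exacts [Or.inl hi, Or.inr hi]

theorem card_le_five_of_pairwise_adjBox (S : Finset (Fin 2 → ℝ × ℝ))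
    (hpos : ∀ I ∈ S, ∀ i, (I i).1 < (I i).2)
    (hadj : ∀ I ∈ S, ∀ J ∈ S, I ≠ J → AdjBox I J) : S.card ≤ 5 :=
  card_le_five_of_forall_not_triangle (r := fun I J => AdjI (I 0) (J 0))
    (s := fun I J => AdjI (I 1) (J 1))
    (fun I hI J hJ hIJ => (hadj I hI J hJ hIJ).fin_two)
    (fun I hI J hJ K hK => not_adjI_triangle (hpos I hI 0) (hpos J hJ 0) (hpos K hK 0))
    (fun I hI J hJ K hK => not_adjI_triangle (hpos I hI 1) (hpos J hJ 1) (hpos K hK 1))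

noncomputable def fiveBoxes : Finset (Fin 2 → ℝ × ℝ) :=
  {![(0, 1), (0, 1)], ![(1, 2), (2, 3)], ![(1, 3), (3, 4)], ![(2, 3), (1, 3)],
    ![(3, 4), (1, 2)]}

theorem fiveBoxes_pos : ∀ I ∈ fiveBoxes, ∀ i, (I i).1 < (I i).2 := by
  simp only [fiveBoxes, Finset.mem_insert, Finset.mem_singleton]
  rintro I (rfl | rfl | rfl | rfl | rfl) i <;> fin_cases i <;> norm_num

theorem fiveBoxes_adjBox : ∀ I ∈ fiveBoxes, ∀ J ∈ fiveBoxes, I ≠ J → AdjBox I J := by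
  simp only [fiveBoxes, Finset.mem_insert, Finset.mem_singleton]
  rintro I (rfl | rfl | rfl | rfl | rfl) J (rfl | rfl | rfl | rfl | rfl) hIJ <;>
    simp only [ne_eq, not_true_eq_false] at hIJ <;>
    simp only [AdjBox, Fin.exists_fin_two] <;>
    norm_num [adjI_iff]

theorem fiveBoxes_card : fiveBoxes.card = 5 := by
  simp [fiveBoxes, funext_iff, Fin.forall_fin_two]

/-- The maximum cardinality of a nearly neighbourly family of 2-boxes is exactly 5. -/
theorem stmt_16 :
    (∀ S : Finset (Fin 2 → ℝ × ℝ),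
      (∀ I ∈ S, ∀ i, (I i).1 < (I i).2) →
      (∀ I ∈ S, ∀ J ∈ S, I ≠ J → AdjBox I J) → S.card ≤ 5) ∧
    (∃ S : Finset (Fin 2 → ℝ × ℝ),
      (∀ I ∈ S, ∀ i, (I i).1 < (I i).2) ∧
      (∀ I ∈ S, ∀ J ∈ S, I ≠ J → AdjBox I J) ∧ S.card = 5) :=
  ⟨card_le_five_of_pairwise_adjBox, fiveBoxes, fiveBoxes_pos, fiveBoxes_adjBox, fiveBoxes_card⟩
end
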